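/- Let ξ > 0, let t ∈ ℝ with t < −ξ/2, and let ε ∈ (0,1). Let F₊ and F₋ denote the cumulative distribution functions of N(ξ/2, 1) and N(−ξ/2, 1), respectively. If F₊(t) ≥ (1−ε)·F₋(t), then ξ ≤ log(1 + ε/(1−ε)) / |t|. -/

import Mathlib

/-!
The likelihood ratio of `N(ξ/2,1)` to `N(−ξ/2,1)` at `y` is `exp(ξ y)`, increasing in `y`. On
`(−∞, t]` it is therefore at most `exp(ξ t)`, so `F₊(t) ≤ exp(ξ t) F₋(t)`. Together with the hypothesis
this gives `1 − ε ≤ exp(−ξ |t|)`, i.e. `ξ |t| ≤ −log(1 − ε) = log(1 + ε/(1 − ε))`.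
-/

open MeasureTheory

/-- The probability density function of the standard Gaussian `N(0,1)`. -/
noncomputable def gaussPDF (x : ℝ) : ℝ := Real.exp (-x ^ 2 / 2) / Real.sqrt (2 * Real.pi)

/-- The cumulative distribution function of the standard Gaussian `N(0,1)`. -/
noncomputable def stdGaussCDF (t : ℝ) : ℝ := ∫ y in Set.Iic t, gaussPDF y

lemma gaussPDF_pos (x : ℝ) : 0 < gaussPDF x := by
  unfold gaussPDF
  positivity

lemma integrable_gaussPDF : Integrable gaussPDF := by
  have hexp : Integrable fun x : ℝ ↦ Real.exp (-(1 / 2) * x ^ 2) :=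
    integrable_exp_neg_mul_sq (by norm_num)
  convert hexp.div_const (Real.sqrt (2 * Real.pi)) using 2 with x
  unfold gaussPDF
  ring_nf

lemma stdGaussCDF_pos (t : ℝ) : 0 < stdGaussCDF t := by
  have hsupp : Function.support gaussPDF = Set.univ :=
    Set.eq_univ_of_forall fun x ↦ (gaussPDF_pos x).ne'
  rw [stdGaussCDF, setIntegral_pos_iff_support_of_nonneg_ae
    (ae_of_all _ fun x ↦ (gaussPDF_pos x).le) integrable_gaussPDF.integrableOn,
    hsupp, Set.univ_inter]
  simp

lemma stdGaussCDF_sub_eq_setIntegral (s c : ℝ) :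
    stdGaussCDF (s - c) = ∫ y in Set.Iic s, gaussPDF (y - c) := by
  rw [stdGaussCDF, ← (measurePreserving_sub_right volume c).setIntegral_preimage_emb
    (measurableEmbedding_subRight c), Set.preimage_sub_const_Iic, sub_add_cancel]

lemma gaussPDF_sub_eq_exp_mul (y ξ : ℝ) :
    gaussPDF (y - ξ) = Real.exp (ξ * y - ξ ^ 2 / 2) * gaussPDF y := by
  unfold gaussPDF
  rw [mul_div_assoc', ← Real.exp_add]
  ring_nf

lemma stdGaussCDF_sub_le_exp_mul {ξ : ℝ} (hξ : 0 ≤ ξ) (s : ℝ) :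
    stdGaussCDF (s - ξ) ≤ Real.exp (ξ * s - ξ ^ 2 / 2) * stdGaussCDF s := by
  rw [stdGaussCDF_sub_eq_setIntegral, stdGaussCDF, ← integral_const_mul]
  refine setIntegral_mono_on (integrable_gaussPDF.comp_sub_right ξ).integrableOn
    (integrable_gaussPDF.const_mul _).integrableOn measurableSet_Iic fun y hy ↦ ?_
  rw [gaussPDF_sub_eq_exp_mul]
  gcongr
  · exact (gaussPDF_pos y).le
  · exact hy

/-- If the CDFs `F₊` of `N(ξ/2,1)` and `F₋` of `N(−ξ/2,1)` satisfy
`F₊(t) ≥ (1−ε)·F₋(t)` at some `t < −ξ/2`, then `ξ ≤ log(1 + ε/(1−ε))/|t|`. -/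
theorem stmt13 (ξ t ε : ℝ) (hξ : 0 < ξ) (ht : t < -ξ / 2) (hε : ε ∈ Set.Ioo (0 : ℝ) 1)
    (h : stdGaussCDF (t - ξ / 2) ≥ (1 - ε) * stdGaussCDF (t + ξ / 2)) :
    ξ ≤ Real.log (1 + ε / (1 - ε)) / |t| := by
  obtain ⟨-, hε1⟩ := hε
  have ht0 : t < 0 := by linarith
  have hratio : stdGaussCDF (t - ξ / 2) ≤ Real.exp (ξ * t) * stdGaussCDF (t + ξ / 2) := by
    have := stdGaussCDF_sub_le_exp_mul hξ.le (t + ξ / 2)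
    rwa [show t + ξ / 2 - ξ = t - ξ / 2 by ring, show ξ * (t + ξ / 2) - ξ ^ 2 / 2 = ξ * t by ring]
      at this
  have hexp : 1 - ε ≤ Real.exp (ξ * t) :=
    le_of_mul_le_mul_right (h.trans hratio) (stdGaussCDF_pos _)
  have hlog : Real.log (1 - ε) ≤ ξ * t := (Real.log_le_iff_le_exp (by linarith)).mpr hexp
  have hrhs : 1 + ε / (1 - ε) = (1 - ε)⁻¹ := by
    field_simp [(by linarith : (1 : ℝ) - ε ≠ 0)]
    ring
  rw [hrhs, Real.log_inv, abs_of_neg ht0, le_div_iff₀ (by linarith)]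
  linarith
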